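/- Let m₁, m₂ be natural numbers and X, Y, α, β, γ, δ complex numbers. Then ∫₀^{2π} ∫₀^{π} (uX + vY)^{m₁+m₂} (α ū + β v̄)^{m₁} (γ ū + δ v̄)^{m₂} sinθ dθ dφ = (4π/(m₁+m₂+1)) · (αX + βY)^{m₁} (γX + δY)^{m₂}. -/

import Mathlib

/-! `(u X + v Y)^n` is a reproducing kernel for the homogeneous polynomials of degree `n` in
`(ū, v̄)`. The monomials `u^a v^b` with `a + b = n` are orthogonal on the sphere (the phase of
`u^k v^{n-k} ū^a v̄^b` is `e^{i(k-a)φ}`), and the `θ`-integral of `|u^a v^b|²` is a Beta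
integral equal to `4π / ((n+1) C(n,a))`. Expanding `(u X + v Y)^n`
binomially, this norm cancels the binomial coefficient, so integrating `P(ū, v̄)` against the
kernel returns `4π/(n+1) · P(X, Y)`. The theorem is the case
`P(x, y) = (α x + β y)^{m₁} (γ x + δ y)^{m₂}`. -/

open Complex Real

/-- The spinor coordinate `u = cos(θ/2)·e^{iφ/2}`. -/
noncomputable def spinU (θ φ : ℝ) : ℂ :=
  (Real.cos (θ / 2) : ℂ) * Complex.exp (Complex.I * φ / 2)

/-- The spinor coordinate `v = sin(θ/2)·e^{-iφ/2}`. -/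
noncomputable def spinV (θ φ : ℝ) : ℂ :=
  (Real.sin (θ / 2) : ℂ) * Complex.exp (-(Complex.I * φ / 2))

open ComplexConjugate MvPolynomial

theorem integral_pow_mul_one_sub_pow (p q : ℕ) :
    ∫ x in (0:ℝ)..1, x ^ p * (1 - x) ^ q = 1 / ((p + q + 1) * (p + q).choose p) := by
  have hp : 0 < ((p : ℂ) + 1).re := by simp; positivity
  have hq : 0 < ((q : ℂ) + 1).re := by simp; positivity
  have hB := Complex.Gamma_mul_Gamma_eq_betaIntegral hp hq
  rw [show (p : ℂ) + 1 + (q + 1) = ((p + q + 1 : ℕ) : ℂ) + 1 by push_cast; ring,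
    Complex.Gamma_nat_eq_factorial, Complex.Gamma_nat_eq_factorial,
    Complex.Gamma_nat_eq_factorial, Complex.betaIntegral] at hB
  have hint : ∫ x in (0:ℝ)..1, (x : ℂ) ^ ((p : ℂ) + 1 - 1) * (1 - (x : ℂ)) ^ ((q : ℂ) + 1 - 1)
      = ((∫ x in (0:ℝ)..1, x ^ p * (1 - x) ^ q : ℝ) : ℂ) := by
    rw [← intervalIntegral.integral_ofReal]
    refine intervalIntegral.integral_congr fun x _ => ?_
    simp only [add_sub_cancel_right, Complex.cpow_natCast]
    push_cast; ring
  rw [hint] at hB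
  have hB' : (p.factorial * q.factorial : ℝ)
      = (p + q + 1).factorial * ∫ x in (0:ℝ)..1, x ^ p * (1 - x) ^ q := by
    exact_mod_cast hB
  rw [Nat.factorial_succ, ← Nat.add_choose_mul_factorial_mul_factorial, ← Nat.choose_symm_add]
    at hB'
  have hpq : (p.factorial * q.factorial : ℝ) ≠ 0 := by positivity
  have hchoose : ((p + q).choose p : ℝ) ≠ 0 :=
    Nat.cast_ne_zero.mpr (Nat.choose_pos (Nat.le_add_right p q)).ne'
  rw [eq_div_iff (mul_ne_zero (by positivity) hchoose), ← mul_right_inj' hpq]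
  push_cast at hB'
  linear_combination -hB'

theorem integral_cos_half_pow_mul_sin_half_pow_mul_sin (p q : ℕ) :
    ∫ θ in (0:ℝ)..π, Real.cos (θ / 2) ^ (2 * p) * Real.sin (θ / 2) ^ (2 * q) * Real.sin θ
      = 2 / ((p + q + 1) * (p + q).choose p) := by
  have hderiv : ∀ x ∈ Set.uIcc (0:ℝ) π,
      HasDerivAt (fun θ : ℝ => Real.sin (θ / 2) ^ 2) (Real.sin (x / 2) * Real.cos (x / 2)) x := by
    intro x _
    refine ((((hasDerivAt_id x).div_const 2).sin).fun_pow 2).congr_deriv ?_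
    simp; ring
  -- substitute `s = sin² (θ / 2)`, so that `ds = sin θ dθ / 2`
  have hsubst := intervalIntegral.integral_deriv_smul_comp hderiv (by fun_prop)
    (by fun_prop : Continuous fun s : ℝ => s ^ q * (1 - s) ^ p)
  simp only [Function.comp_def, zero_div, Real.sin_zero, Real.sin_pi_div_two, smul_eq_mul] at hsubst
  rw [zero_pow two_ne_zero, one_pow, integral_pow_mul_one_sub_pow, Nat.choose_symm_add,
    add_comm q p, add_comm (q : ℝ)] at hsubst
  rw [← mul_one_div, ← hsubst, ← intervalIntegral.integral_const_mul]
  refine intervalIntegral.integral_congr fun x _ => ?_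
  have hsin : Real.sin x = 2 * Real.sin (x / 2) * Real.cos (x / 2) := by
    rw [← Real.sin_two_mul]; ring_nf
  rw [← Real.cos_sq' (x / 2), hsin, pow_mul, pow_mul]
  ring

theorem integral_exp_I_mul_int_mul (d : ℤ) :
    ∫ φ in (0:ℝ)..2 * π, Complex.exp (I * d * φ) = if d = 0 then (2 * π : ℂ) else 0 := by
  split_ifs with hd
  · simp [hd]
  · have hc : I * d ≠ 0 := mul_ne_zero I_ne_zero (Int.cast_ne_zero.mpr hd)
    have hperiod : Complex.exp (I * d * (2 * π : ℝ)) = 1 := by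
      rw [← Complex.exp_int_mul_two_pi_mul_I d]; push_cast; ring_nf
    rw [integral_exp_mul_complex hc, hperiod]
    simp

noncomputable def sphereIntegral (f : ℝ → ℝ → ℂ) : ℂ :=
  ∫ φ in (0:ℝ)..2 * π, ∫ θ in (0:ℝ)..π, f θ φ * (Real.sin θ : ℂ)

theorem sphereIntegral_const_mul (c : ℂ) (f : ℝ → ℝ → ℂ) :
    sphereIntegral (fun θ φ => c * f θ φ) = c * sphereIntegral f := by
  simp only [sphereIntegral, mul_assoc, intervalIntegral.integral_const_mul]

theorem sphereIntegral_mul (f g : ℝ → ℂ) :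
    sphereIntegral (fun θ φ => f θ * g φ)
      = (∫ θ in (0:ℝ)..π, f θ * (Real.sin θ : ℂ)) * ∫ φ in (0:ℝ)..2 * π, g φ := by
  simp only [sphereIntegral, mul_right_comm _ (g _), intervalIntegral.integral_mul_const,
    intervalIntegral.integral_const_mul]

theorem sphereIntegral_finset_sum {ι : Type*} (s : Finset ι) (f : ι → ℝ → ℝ → ℂ)
    (hf : ∀ i ∈ s, Continuous (Function.uncurry (f i))) :
    sphereIntegral (fun θ φ => ∑ i ∈ s, f i θ φ) = ∑ i ∈ s, sphereIntegral (f i) := by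
  have hcont : ∀ i ∈ s, Continuous (Function.uncurry fun φ θ => f i θ φ * (Real.sin θ : ℂ)) :=
    fun i hi => ((hf i hi).comp continuous_swap).mul (by fun_prop)
  simp only [sphereIntegral, Finset.sum_mul]
  rw [← intervalIntegral.integral_finsetSum fun i hi =>
    (intervalIntegral.continuous_parametric_intervalIntegral_of_continuous' (hcont i hi) 0 π
      ).intervalIntegrable _ _]
  refine intervalIntegral.integral_congr fun φ _ => ?_
  exact intervalIntegral.integral_finsetSum fun i hi =>
    ((hcont i hi).comp (continuous_const.prodMk continuous_id)).intervalIntegrable _ _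

theorem conj_spinU (θ φ : ℝ) :
    conj (spinU θ φ) = (Real.cos (θ / 2) : ℂ) * Complex.exp (-(I * φ / 2)) := by
  rw [spinU, map_mul, conj_ofReal, ← Complex.exp_conj]
  simp [map_div₀, map_ofNat, neg_div]

theorem conj_spinV (θ φ : ℝ) :
    conj (spinV θ φ) = (Real.sin (θ / 2) : ℂ) * Complex.exp (I * φ / 2) := by
  rw [spinV, map_mul, conj_ofReal, ← Complex.exp_conj]
  simp [map_div₀, map_ofNat, neg_div]

@[fun_prop]
theorem continuous_spinU : Continuous (Function.uncurry spinU) := by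
  unfold spinU; fun_prop

@[fun_prop]
theorem continuous_spinV : Continuous (Function.uncurry spinV) := by
  unfold spinV; fun_prop

theorem spinU_pow_mul_spinV_pow_mul_conj_pow_mul_conj_pow {k l a b : ℕ} (h : k + l = a + b)
    (θ φ : ℝ) :
    spinU θ φ ^ k * spinV θ φ ^ l * conj (spinU θ φ) ^ a * conj (spinV θ φ) ^ b
      = ((Real.cos (θ / 2) ^ (k + a) * Real.sin (θ / 2) ^ (l + b) : ℝ) : ℂ)
        * Complex.exp (I * ((k - a : ℤ) : ℂ) * φ) := by
  have hphase : Complex.exp (I * φ / 2) ^ (k + b) * Complex.exp (-(I * φ / 2)) ^ (l + a)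
      = Complex.exp (I * ((k - a : ℤ) : ℂ) * φ) := by
    rw [← Complex.exp_nat_mul, ← Complex.exp_nat_mul, ← Complex.exp_add]
    have hexp : ((k + b : ℕ) : ℂ) = (l + a : ℕ) + 2 * ((k - a : ℤ) : ℂ) := by
      exact_mod_cast (by omega : ((k + b : ℕ) : ℤ) = (l + a : ℕ) + 2 * ((k : ℤ) - a))
    rw [hexp]
    ring_nf
  rw [conj_spinU, conj_spinV, spinU, spinV, ← hphase]
  push_cast
  ring

theorem sphereIntegral_spinor_monomial {k l a b : ℕ} (h : k + l = a + b) :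
    sphereIntegral (fun θ φ =>
        spinU θ φ ^ k * spinV θ φ ^ l * conj (spinU θ φ) ^ a * conj (spinV θ φ) ^ b)
      = if k = a then ((4 * π / ((a + b + 1) * (a + b).choose a) : ℝ) : ℂ) else 0 := by
  simp_rw [spinU_pow_mul_spinV_pow_mul_conj_pow_mul_conj_pow h]
  rw [sphereIntegral_mul, integral_exp_I_mul_int_mul]
  simp only [sub_eq_zero, Int.natCast_inj]
  split_ifs with hka
  · obtain rfl : l = b := by omega
    subst hka
    simp_rw [← two_mul, ← ofReal_mul, intervalIntegral.integral_ofReal]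
    rw [integral_cos_half_pow_mul_sin_half_pow_mul_sin]
    push_cast
    ring
  · rw [mul_zero]

theorem sphereIntegral_reproducing_monomial (a b : ℕ) (X Y : ℂ) :
    sphereIntegral (fun θ φ => (spinU θ φ * X + spinV θ φ * Y) ^ (a + b) *
        (conj (spinU θ φ) ^ a * conj (spinV θ φ) ^ b))
      = ((4 * π / (a + b + 1) : ℝ) : ℂ) * (X ^ a * Y ^ b) := by
  have hexpand : ∀ θ φ, (spinU θ φ * X + spinV θ φ * Y) ^ (a + b) *
        (conj (spinU θ φ) ^ a * conj (spinV θ φ) ^ b)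
      = ∑ k ∈ Finset.range (a + b + 1), X ^ k * Y ^ (a + b - k) * (a + b).choose k *
          (spinU θ φ ^ k * spinV θ φ ^ (a + b - k) *
            conj (spinU θ φ) ^ a * conj (spinV θ φ) ^ b) := by
    intro θ φ
    rw [add_pow, Finset.sum_mul]
    exact Finset.sum_congr rfl fun k _ => by ring
  simp only [hexpand]
  rw [sphereIntegral_finset_sum _ _ fun k _ => by fun_prop]
  simp only [sphereIntegral_const_mul]
  rw [Finset.sum_eq_single a]
  · rw [sphereIntegral_spinor_monomial (by omega), if_pos rfl, Nat.add_sub_cancel_left]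
    have hchoose : ((a + b).choose a : ℂ) ≠ 0 :=
      Nat.cast_ne_zero.mpr (Nat.choose_pos (Nat.le_add_right a b)).ne'
    push_cast
    field_simp
  · intro k hk hka
    rw [sphereIntegral_spinor_monomial (by grind), if_neg hka, mul_zero]
  · intro ha
    exact absurd (Finset.mem_range.mpr (by omega)) ha

theorem sphereIntegral_reproducing {n : ℕ} {P : MvPolynomial (Fin 2) ℂ} (hP : P.IsHomogeneous n)
    (X Y : ℂ) :
    sphereIntegral (fun θ φ => (spinU θ φ * X + spinV θ φ * Y) ^ n *
        eval ![conj (spinU θ φ), conj (spinV θ φ)] P)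
      = ((4 * π / (n + 1) : ℝ) : ℂ) * eval ![X, Y] P := by
  have hdeg : ∀ d ∈ P.support, d 0 + d 1 = n := fun d hd => by
    simp [hP.degree_eq_sum_deg_support hd, ← Finsupp.degree_apply, Finsupp.degree_eq_sum]
  simp only [eval_eq', Fin.prod_univ_two, Matrix.cons_val_zero, Matrix.cons_val_one,
    Finset.mul_sum]
  rw [sphereIntegral_finset_sum _ _ fun d _ => by fun_prop]
  refine Finset.sum_congr rfl fun d hd => ?_
  rw [← hdeg d hd]
  simp only [mul_left_comm _ (coeff d P), sphereIntegral_const_mul,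
    sphereIntegral_reproducing_monomial]
  push_cast
  ring

/-- The SU(2)-covariant sphere integral
`∫₀^{2π} ∫₀^{π} (uX + vY)^{m₁+m₂} (αū + βv̄)^{m₁} (γū + δv̄)^{m₂} sinθ dθ dφ
  = (4π/(m₁+m₂+1))·(αX + βY)^{m₁} (γX + δY)^{m₂}`. -/
theorem spinor_covariant_integral (m₁ m₂ : ℕ) (X Y α β γ δ : ℂ) :
    (∫ φ in (0:ℝ)..(2 * Real.pi), ∫ θ in (0:ℝ)..Real.pi,
        (spinU θ φ * X + spinV θ φ * Y) ^ (m₁ + m₂) *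
          (α * (starRingEnd ℂ) (spinU θ φ) + β * (starRingEnd ℂ) (spinV θ φ)) ^ m₁ *
          (γ * (starRingEnd ℂ) (spinU θ φ) + δ * (starRingEnd ℂ) (spinV θ φ)) ^ m₂ *
          (Real.sin θ : ℂ))
      = ((4 * Real.pi / (m₁ + m₂ + 1) : ℝ) : ℂ) *
          ((α * X + β * Y) ^ m₁ * (γ * X + δ * Y) ^ m₂) := by
  let L (a b : ℂ) : MvPolynomial (Fin 2) ℂ := C a * MvPolynomial.X 0 + C b * MvPolynomial.X 1
  have hL (a b : ℂ) : (L a b).IsHomogeneous 1 :=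
    (isHomogeneous_C_mul_X a 0).add (isHomogeneous_C_mul_X b 1)
  let P := L α β ^ m₁ * L γ δ ^ m₂
  have hP : P.IsHomogeneous (m₁ + m₂) := by
    simpa using ((hL α β).pow m₁).mul ((hL γ δ).pow m₂)
  have hP_eval (x y : ℂ) : eval ![x, y] P = (α * x + β * y) ^ m₁ * (γ * x + δ * y) ^ m₂ := by
    simp [P, L]
  have h := sphereIntegral_reproducing hP X Y
  simp only [sphereIntegral, hP_eval] at h
  push_cast at h ⊢
  simpa only [mul_assoc] using h
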